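/- arXiv:1304.0800 — 2 statements merged into one kernel-verified Lean document; each statement's English description precedes it below -/
import Mathlib

section
/- Let γ be any real number and k ≥ 1. There exists s₀ ≥ 0 such that for every real s > s₀ the operators I − γ L_k(s) δ on E_k and I − γ L^0_{k−1}(s) on ℓ¹(X_{k−1}^+) are boundedly invertible, and (I − γ L_k(s) δ)^{−1} L_k(s) = L_k(s) + γ L^0_{k,k−1}(s) (I − γ L^0_{k−1}(s))^{−1} L^0_{k−1,k}(s). -/
open MeasureTheory Set
open scoped Classical
noncomputable section

/-- Configurations of `n` particles on `ℤ⁺`: strictly increasing `n`-tuples of naturals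
(`X_0` is a singleton). -/
def Conf (n : ℕ) : Type := {x : Fin n → ℕ // StrictMono x}

instance (n : ℕ) : DecidableEq (Conf n) := by unfold Conf; infer_instance

/-- `E_n = ℓ¹(X_n)`. -/
abbrev En (n : ℕ) : Type := lp (fun _ : Conf n => ℝ) 1

/-- Real-valued indicator of a proposition. -/
def ind (P : Prop) : ℝ := if P then 1 else 0

/-- Extension of a function on configurations to all tuples, by zero. -/
def extFun {n : ℕ} (u : Conf n → ℝ) (y : Fin n → ℕ) : ℝ :=
  if h : StrictMono y then u ⟨y, h⟩ else 0

/-- The tuple `x^{i,+}`. -/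
def up {n : ℕ} (x : Fin n → ℕ) (i : Fin n) : Fin n → ℕ := Function.update x i (x i + 1)

/-- The tuple `x^{i,-}`. -/
def down {n : ℕ} (x : Fin n → ℕ) (i : Fin n) : Fin n → ℕ := Function.update x i (x i - 1)

/-- `x^{i,+} ∈ X_n`. -/
def upOK {n : ℕ} (x : Fin n → ℕ) (i : Fin n) : Prop := StrictMono (up x i)

/-- `x^{i,-} ∈ X_n`: the particle at site `x i` can move left to a nonnegative site. -/
def downOK {n : ℕ} (x : Fin n → ℕ) (i : Fin n) : Prop := 0 < x i ∧ StrictMono (down x i)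

/-- The action of the `n`-particle ASEP generator on `ℤ⁺`. -/
def Qact (p q : ℝ) {n : ℕ} (u : Conf n → ℝ) (x : Conf n) : ℝ :=
  ∑ i : Fin n,
    (p * ind (downOK x.1 i) * extFun u (down x.1 i)
     + q * ind (upOK x.1 i) * extFun u (up x.1 i)
     - p * ind (upOK x.1 i) * u x
     - q * ind (downOK x.1 i) * u x)

/-- The action of `δ` (multiplication by the indicator of `x₁ = 0`; zero on `E₀`). -/
def Dact {n : ℕ} (u : Conf n → ℝ) (x : Conf n) : ℝ :=
  ind (∃ h : 0 < n, x.1 ⟨0, h⟩ = 0) * u x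

/-- Tail of a configuration. -/
def confTail {n : ℕ} (x : Conf (n+1)) : Conf n :=
  ⟨fun i => x.1 i.succ, fun _ _ h => x.2 (Fin.succ_lt_succ_iff.mpr h)⟩

/-- The action of `A_{n+1} : E_n → E_{n+1}`, `(A F)(x₁,…,x_{n+1}) = 1{x₁=0}·F(x₂,…,x_{n+1})`. -/
def Aact {n : ℕ} (F : Conf n → ℝ) (x : Conf (n+1)) : ℝ :=
  ind (x.1 0 = 0) * F (confTail x)

/-- The action of `B_n : E_{n+1} → E_n`, `(B F)(x₁,…,x_n) = 1{x₁>0}·F(0,x₁,…,x_n)`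
(for `n = 0`, `B₀ F = F(0)`). -/
def Bact {n : ℕ} (F : Conf (n+1) → ℝ) (x : Conf n) : ℝ :=
  ind (¬ ∃ h : 0 < n, x.1 ⟨0, h⟩ = 0) * extFun F (Fin.cons 0 x.1)

/-- Laplace transform `L(s) = ∫_0^∞ e^{-st} e^{tQ} dt` of the semigroup generated by `Q`. -/
def Lop {X : Type} [NormedAddCommGroup X] [NormedSpace ℝ X] [CompleteSpace X]
    (Q : X →L[ℝ] X) (s : ℝ) : X →L[ℝ] X :=
  ∫ t in Ioi (0:ℝ), Real.exp (-(s*t)) • (NormedSpace.expSeries ℝ (X →L[ℝ] X)).sum (t • Q)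

/-- The Bochner integral defining `L(s)` converges. -/
def LapConv {X : Type} [NormedAddCommGroup X] [NormedSpace ℝ X] [CompleteSpace X]
    (Q : X →L[ℝ] X) (s : ℝ) : Prop :=
  IntegrableOn (fun t => Real.exp (-(s*t)) • (NormedSpace.expSeries ℝ (X →L[ℝ] X)).sum (t • Q)) (Ioi (0:ℝ))


/-- Configurations with `x₁ > 0` (all of `X_0` when `n = 0`). -/
def ConfP (n : ℕ) : Type := {x : Conf n // ∀ h : 0 < n, 0 < x.1 ⟨0, h⟩}

instance (n : ℕ) : DecidableEq (ConfP n) := by unfold ConfP Conf; infer_instance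

/-- The configuration `(0, x)` for `x ∈ X_n⁺`. -/
def cons0 {n : ℕ} (x : ConfP n) : Conf (n+1) :=
  ⟨Fin.cons 0 x.1.1, by
    intro i j hij
    induction j using Fin.cases with
    | zero => exact absurd hij (Fin.not_lt_zero _).elim
    | succ j' =>
      induction i using Fin.cases with
      | zero =>
        simp only [Fin.cons_zero, Fin.cons_succ]
        exact lt_of_lt_of_le (x.2 j'.pos)
          (x.1.2.monotone (by simp [Fin.le_def]))
      | succ i' =>
        simp only [Fin.cons_succ]
        exact x.1.2 (by exact_mod_cast Fin.succ_lt_succ_iff.mp hij)⟩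

/-- `ℓ¹(X_n⁺)`. -/
abbrev Ep (n : ℕ) : Type := lp (fun _ : ConfP n => ℝ) 1
/-!
For `s > ‖Q‖` the Laplace integral converges in operator norm and `‖L(s)‖ ≤ (s - ‖Q‖)⁻¹`.
The operator `δ` factors as `δ = A B` through `ℓ¹(X_{k-1}⁺)`, where `B u = u ∘ cons0` and `A`
extends by zero along `cons0`, both of norm at most one; in these terms `L⁰_{k-1} = B L A`,
`L⁰_{k,k-1} = L A` and `L⁰_{k-1,k} = B L`. Once `|γ| ‖L(s)‖ < 1`, both `I - γ L A B` and
`I - γ B L A` are inverted by Neumann series, and the identity is the push-through identity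
`(I - γ L A B)⁻¹ L = L + γ L A (I - γ B L A)⁻¹ B L`, valid for arbitrary bounded operators.
-/

section L1Maps

variable {α β : Type*} (g : α → β) (hg : Function.Injective g)

lemma summable_norm_of_l1 (f : lp (fun _ : α => ℝ) 1) : Summable fun a => ‖f a‖ := by
  simpa using (lp.memℓp f).summable (p := 1) (by norm_num)

lemma hasSum_norm_l1 (f : lp (fun _ : α => ℝ) 1) : HasSum (fun a => ‖f a‖) ‖f‖ := by
  simpa using lp.hasSum_norm (p := 1) one_pos f

lemma memℓp_one_of_summable_norm {f : α → ℝ} (h : Summable fun a => ‖f a‖) : Memℓp f 1 :=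
  memℓp_gen (by simpa using h)

lemma norm_extend_zero (u : α → ℝ) :
    (fun b => ‖Function.extend g u 0 b‖) = Function.extend g (fun a => ‖u a‖) 0 := by
  funext b
  rw [Function.apply_extend (g := u) norm g 0 b, Function.comp_def, Function.comp_def]
  simp only [Pi.zero_apply, norm_zero]
  rfl

def l1Comap : lp (fun _ : β => ℝ) 1 →L[ℝ] lp (fun _ : α => ℝ) 1 :=
  LinearMap.mkContinuous
    { toFun := fun F => ⟨fun a => F (g a),
        memℓp_one_of_summable_norm ((summable_norm_of_l1 F).comp_injective hg)⟩
      map_add' := fun _ _ => rfl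
      map_smul' := fun _ _ => rfl }
    1 fun F => by
      rw [one_mul, ← (hasSum_norm_l1 _).tsum_eq, ← (hasSum_norm_l1 F).tsum_eq]
      exact Summable.tsum_le_tsum_of_inj g hg (fun _ _ => norm_nonneg _) (fun _ => le_rfl)
        ((summable_norm_of_l1 F).comp_injective hg) (summable_norm_of_l1 F)

def l1Extend : lp (fun _ : α => ℝ) 1 →L[ℝ] lp (fun _ : β => ℝ) 1 :=
  LinearMap.mkContinuous
    { toFun := fun u => ⟨Function.extend g (fun a => u a) 0,
        memℓp_one_of_summable_norm <| by
          rw [norm_extend_zero]; exact (summable_extend_zero hg).2 (summable_norm_of_l1 u)⟩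
      map_add' := fun u v => Subtype.ext ((Function.ExtendByZero.linearMap ℝ g).map_add u v)
      map_smul' := fun c u => Subtype.ext ((Function.ExtendByZero.linearMap ℝ g).map_smul c u) }
    1 fun u => by
      rw [one_mul]
      refine le_of_eq (HasSum.unique ?_ (hasSum_norm_l1 u))
      rw [← hasSum_extend_zero hg, ← norm_extend_zero]
      exact hasSum_norm_l1 _

lemma l1Comap_apply (F : lp (fun _ : β => ℝ) 1) (a : α) : l1Comap g hg F a = F (g a) := rfl

lemma l1Extend_apply (u : lp (fun _ : α => ℝ) 1) (b : β) :
    l1Extend g hg u b = Function.extend g (fun a => u a) 0 b := rfl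

lemma norm_l1Comap_le : ‖l1Comap g hg‖ ≤ 1 := LinearMap.mkContinuous_norm_le _ zero_le_one _

lemma norm_l1Extend_le : ‖l1Extend g hg‖ ≤ 1 := LinearMap.mkContinuous_norm_le _ zero_le_one _

lemma l1Extend_single [DecidableEq α] [DecidableEq β] (a : α) (c : ℝ) :
    l1Extend g hg (lp.single 1 a c) = lp.single 1 (g a) c := by
  ext b
  rw [l1Extend_apply]
  by_cases hb : ∃ a', g a' = b
  · obtain ⟨a', rfl⟩ := hb
    simp [hg.extend_apply, lp.single_apply, Pi.single_apply, hg.eq_iff]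
  · rw [Function.extend_apply' _ _ _ hb, lp.single_apply,
      Pi.single_eq_of_ne (fun h => hb ⟨a, h.symm⟩)]
    rfl

lemma l1Extend_comp_l1Comap_apply (F : lp (fun _ : β => ℝ) 1) (b : β) :
    (l1Extend g hg).comp (l1Comap g hg) F b = (Set.range g).indicator F b := by
  rw [ContinuousLinearMap.comp_apply, l1Extend_apply]
  by_cases hb : ∃ a, g a = b
  · obtain ⟨a, rfl⟩ := hb
    rw [hg.extend_apply, Set.indicator_of_mem (Set.mem_range_self a), l1Comap_apply]
  · rw [Function.extend_apply' _ _ _ hb, Set.indicator_of_notMem (by exact hb)]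
    rfl

end L1Maps

lemma norm_exp_le_exp_norm {𝔸 : Type*} [NormedRing 𝔸] [NormedAlgebra ℝ 𝔸] [CompleteSpace 𝔸]
    (h1 : ‖(1 : 𝔸)‖ ≤ 1) (x : 𝔸) : ‖NormedSpace.exp x‖ ≤ Real.exp ‖x‖ := by
  rw [NormedSpace.exp_eq_tsum ℝ, Real.exp_eq_exp_ℝ]
  refine tsum_of_norm_bounded (NormedSpace.expSeries_div_hasSum_exp ‖x‖) fun n => ?_
  rw [norm_smul, div_eq_inv_mul, Real.norm_of_nonneg (by positivity)]
  gcongr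
  rcases n.eq_zero_or_pos with rfl | hn
  · simpa using h1
  · exact norm_pow_le' x hn

section Laplace

variable {X : Type} [NormedAddCommGroup X] [NormedSpace ℝ X] [CompleteSpace X]

lemma norm_laplace_integrand_le (Q : X →L[ℝ] X) (s : ℝ) {t : ℝ} (ht : 0 ≤ t) :
    ‖Real.exp (-(s * t)) • NormedSpace.exp (t • Q)‖ ≤ Real.exp (-(s - ‖Q‖) * t) := by
  rw [norm_smul, Real.norm_of_nonneg (Real.exp_pos _).le]
  calc Real.exp (-(s * t)) * ‖NormedSpace.exp (t • Q)‖
      ≤ Real.exp (-(s * t)) * Real.exp (t * ‖Q‖) := by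
        gcongr
        refine (norm_exp_le_exp_norm ContinuousLinearMap.norm_id_le _).trans_eq ?_
        rw [norm_smul, Real.norm_of_nonneg ht]
    _ = Real.exp (-(s - ‖Q‖) * t) := by rw [← Real.exp_add]; ring_nf

lemma continuous_laplace_integrand (Q : X →L[ℝ] X) (s : ℝ) :
    Continuous fun t : ℝ => Real.exp (-(s * t)) • NormedSpace.exp (t • Q) := by
  have hexp : Continuous fun t : ℝ => NormedSpace.exp (t • Q) :=
    continuous_iff_continuousAt.2 fun t => (hasDerivAt_exp_smul_const Q t).continuousAt
  fun_prop

lemma lapConv_of_norm_lt (Q : X →L[ℝ] X) {s : ℝ} (hs : ‖Q‖ < s) : LapConv Q s := by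
  rw [LapConv, ← NormedSpace.exp_eq_expSeries_sum ℝ]
  refine (exp_neg_integrableOn_Ioi 0 (sub_pos.2 hs)).mono'
    (continuous_laplace_integrand Q s).aestronglyMeasurable.restrict ?_
  filter_upwards [ae_restrict_mem measurableSet_Ioi] with t ht
  exact norm_laplace_integrand_le Q s (le_of_lt ht)

lemma norm_Lop_le (Q : X →L[ℝ] X) {s : ℝ} (hs : ‖Q‖ < s) : ‖Lop Q s‖ ≤ (s - ‖Q‖)⁻¹ := by
  rw [Lop, ← NormedSpace.exp_eq_expSeries_sum ℝ]
  calc _ ≤ ∫ t in Ioi (0 : ℝ), Real.exp (-(s - ‖Q‖) * t) := by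
        refine norm_integral_le_of_norm_le (exp_neg_integrableOn_Ioi 0 (sub_pos.2 hs)) ?_
        filter_upwards [ae_restrict_mem measurableSet_Ioi] with t ht
        exact norm_laplace_integrand_le Q s (le_of_lt ht)
    _ = (s - ‖Q‖)⁻¹ := by
        rw [integral_exp_mul_Ioi (by linarith) 0, mul_zero, Real.exp_zero, neg_div_neg_eq,
          one_div]

lemma abs_mul_norm_Lop_lt_one (Q : X →L[ℝ] X) {γ s : ℝ} (hs : ‖Q‖ + |γ| < s) :
    |γ| * ‖Lop Q s‖ < 1 := by
  have hpos : 0 < s - ‖Q‖ := by linarith [abs_nonneg γ]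
  calc |γ| * ‖Lop Q s‖ ≤ |γ| * (s - ‖Q‖)⁻¹ := by gcongr; exact norm_Lop_le Q (by linarith)
    _ < 1 := by rw [← div_eq_mul_inv, div_lt_one hpos]; linarith

end Laplace

section PushThrough

variable {E F : Type*} [NormedAddCommGroup E] [NormedSpace ℝ E]
  [NormedAddCommGroup F] [NormedSpace ℝ F]

lemma one_sub_smul_mul_comp_mul_add_eq (γ : ℝ) (L : E →L[ℝ] E) (A : F →L[ℝ] E)
    (R : E →L[ℝ] F) {N₂ : F →L[ℝ] F} (h₂ : (1 - γ • (R.comp L).comp A) * N₂ = 1) :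
    (1 - γ • (L * A.comp R)) * (L + γ • (L.comp A).comp (N₂.comp (R.comp L))) = L := by
  ext v
  have hw : N₂ (R (L v)) - γ • R (L (A (N₂ (R (L v))))) = R (L v) := by
    simpa using ContinuousLinearMap.ext_iff.1 h₂ (R (L v))
  have hLAw := congr(L (A $hw))
  simp only [map_sub, map_smul] at hLAw
  simp only [mul_apply_eq_comp, add_apply, smul_apply, ContinuousLinearMap.comp_apply, sub_apply,
    one_apply_eq_self, map_add, map_smul, hLAw]
  abel

lemma mul_eq_add_smul_comp_of_inverses (γ : ℝ) (L : E →L[ℝ] E) (A : F →L[ℝ] E)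
    (R : E →L[ℝ] F) {N₁ : E →L[ℝ] E} {N₂ : F →L[ℝ] F} (h₁ : N₁ * (1 - γ • (L * A.comp R)) = 1)
    (h₂ : (1 - γ • (R.comp L).comp A) * N₂ = 1) :
    N₁ * L = L + γ • (L.comp A).comp (N₂.comp (R.comp L)) := by
  conv_lhs => rw [← one_sub_smul_mul_comp_mul_add_eq γ L A R h₂, ← mul_assoc, h₁, one_mul]

end PushThrough

lemma exists_inverse_one_sub_of_norm_lt_one {E : Type*} [NormedAddCommGroup E]
    [NormedSpace ℝ E] [CompleteSpace E] {T : E →L[ℝ] E} (hT : ‖T‖ < 1) :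
    ∃ N : E →L[ℝ] E, N * (1 - T) = 1 ∧ (1 - T) * N = 1 :=
  ⟨_, (Units.oneSub T hT).inv_mul, (Units.oneSub T hT).mul_inv⟩

lemma exists_inverses_and_push_through_Lop {E F : Type} [NormedAddCommGroup E] [NormedSpace ℝ E]
    [CompleteSpace E] [NormedAddCommGroup F] [NormedSpace ℝ F] [CompleteSpace F]
    (γ : ℝ) (Q : E →L[ℝ] E) {A : F →L[ℝ] E} {R : E →L[ℝ] F} (hA : ‖A‖ ≤ 1) (hR : ‖R‖ ≤ 1)
    {s : ℝ} (hs : ‖Q‖ + |γ| < s) :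
    ∃ (N₁ : E →L[ℝ] E) (N₂ : F →L[ℝ] F),
      N₁ * (1 - γ • (Lop Q s * A.comp R)) = 1 ∧ (1 - γ • (Lop Q s * A.comp R)) * N₁ = 1 ∧
      N₂ * (1 - γ • (R.comp (Lop Q s)).comp A) = 1 ∧
      (1 - γ • (R.comp (Lop Q s)).comp A) * N₂ = 1 ∧
      N₁ * Lop Q s = Lop Q s + γ • ((Lop Q s).comp A).comp (N₂.comp (R.comp (Lop Q s))) := by
  have hsmall {G : Type} [NormedAddCommGroup G] [NormedSpace ℝ G] (T : G →L[ℝ] G)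
      (hT : ‖T‖ ≤ ‖Lop Q s‖) : ‖γ • T‖ < 1 := by
    rw [norm_smul, Real.norm_eq_abs]
    exact (mul_le_mul_of_nonneg_left hT (abs_nonneg γ)).trans_lt (abs_mul_norm_Lop_lt_one Q hs)
  have hAR : ‖A.comp R‖ ≤ 1 :=
    (ContinuousLinearMap.opNorm_comp_le _ _).trans (mul_le_one₀ hA (norm_nonneg _) hR)
  obtain ⟨N₁, h₁, h₁'⟩ := exists_inverse_one_sub_of_norm_lt_one <| hsmall (Lop Q s * A.comp R) <|
    (norm_mul_le _ _).trans (mul_le_of_le_one_right (norm_nonneg _) hAR)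
  obtain ⟨N₂, h₂, h₂'⟩ := exists_inverse_one_sub_of_norm_lt_one <|
    hsmall ((R.comp (Lop Q s)).comp A) <| calc
      _ ≤ ‖R.comp (Lop Q s)‖ := (ContinuousLinearMap.opNorm_comp_le _ _).trans
          (mul_le_of_le_one_right (norm_nonneg _) hA)
      _ ≤ ‖Lop Q s‖ := (ContinuousLinearMap.opNorm_comp_le _ _).trans
          (mul_le_of_le_one_left (norm_nonneg _) hR)
  exact ⟨N₁, N₂, h₁, h₁', h₂, h₂', mul_eq_add_smul_comp_of_inverses γ _ A R h₁ h₂'⟩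

lemma cons0_injective {n : ℕ} : Function.Injective (cons0 (n := n)) := fun a b hab =>
  Subtype.ext <| Subtype.ext <| funext fun i => by
    simpa [cons0] using congrArg (fun z : Conf (n + 1) => z.1 i.succ) hab

lemma range_cons0 {n : ℕ} : Set.range (cons0 (n := n)) = {x | x.1 0 = 0} := by
  ext x
  refine ⟨fun ⟨a, ha⟩ => ha ▸ rfl, fun hx => ⟨⟨confTail x, fun h => ?_⟩, ?_⟩⟩
  · have hlt : x.1 0 < x.1 (Fin.succ ⟨0, h⟩) := x.2 (Fin.succ_pos _)
    rwa [hx] at hlt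
  · refine Subtype.ext (funext fun i => Fin.cases ?_ (fun j => rfl) i)
    exact hx.symm

lemma eq_l1Extend_comp_l1Comap_cons0 {n : ℕ} (D : En (n + 1) →L[ℝ] En (n + 1))
    (hD : ∀ (u : En (n + 1)) (x : Conf (n + 1)), D u x = Dact (fun z => u z) x) :
    D = (l1Extend cons0 cons0_injective).comp (l1Comap cons0 cons0_injective) := by
  ext u x
  rw [hD, l1Extend_comp_l1Comap_apply, range_cons0, Dact, ind, Set.indicator_apply]
  simp

theorem tracy_widom_remark1_1b_general
    (γ : ℝ) (m : ℕ)
    -- the k-particle generator, k = m+1 ≥ 1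
    (Q : En (m+1) →L[ℝ] En (m+1))
    -- the operator δ on E_k
    (D : En (m+1) →L[ℝ] En (m+1))
    (hD : ∀ (u : En (m+1)) (x : Conf (m+1)), D u x = Dact (fun z => u z) x) :
    ∃ s₀ : ℝ, 0 ≤ s₀ ∧ ∀ s : ℝ, s₀ < s →
      -- the Bochner integral defining L_k(s) converges
      LapConv Q s ∧
      -- the operators with kernels φ̂_k((0,x),(0,y);s), φ̂_k(x,(0,y);s), φ̂_k((0,x),y;s)
      ∃ (L00 : Ep m →L[ℝ] Ep m) (L10 : Ep m →L[ℝ] En (m+1)) (L01 : En (m+1) →L[ℝ] Ep m),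
        (∀ (y x : ConfP m),
          L00 (lp.single 1 y (1:ℝ)) x = Lop Q s (lp.single 1 (cons0 y) (1:ℝ)) (cons0 x)) ∧
        (∀ (y : ConfP m) (x : Conf (m+1)),
          L10 (lp.single 1 y (1:ℝ)) x = Lop Q s (lp.single 1 (cons0 y) (1:ℝ)) x) ∧
        (∀ (y : Conf (m+1)) (x : ConfP m),
          L01 (lp.single 1 y (1:ℝ)) x = Lop Q s (lp.single 1 y (1:ℝ)) (cons0 x)) ∧
        -- bounded invertibility of I - γ L_k(s) δ and I - γ L⁰_{k-1}(s) …
        ∃ (N₁ : En (m+1) →L[ℝ] En (m+1)) (N₂ : Ep m →L[ℝ] Ep m),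
          N₁ * (1 - γ • (Lop Q s * D)) = 1 ∧ (1 - γ • (Lop Q s * D)) * N₁ = 1 ∧
          N₂ * (1 - γ • L00) = 1 ∧ (1 - γ • L00) * N₂ = 1 ∧
          -- … and the identity
          N₁ * Lop Q s = Lop Q s + γ • (L10.comp (N₂.comp L01)) := by
  set A := l1Extend cons0 (cons0_injective (n := m))
  set R := l1Comap cons0 (cons0_injective (n := m))
  obtain rfl : D = A.comp R := eq_l1Extend_comp_l1Comap_cons0 D hD
  refine ⟨‖Q‖ + |γ|, by positivity, fun s hs => ⟨lapConv_of_norm_lt Q (by linarith [abs_nonneg γ]),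
    (R.comp (Lop Q s)).comp A, (Lop Q s).comp A, R.comp (Lop Q s), fun y x => ?_, fun y x => ?_,
    fun y x => rfl,
    exists_inverses_and_push_through_Lop γ Q (norm_l1Extend_le _ _) (norm_l1Comap_le _ _) hs⟩⟩
  · rw [ContinuousLinearMap.comp_apply, ContinuousLinearMap.comp_apply, l1Extend_single]
    rfl
  · rw [ContinuousLinearMap.comp_apply, l1Extend_single]

/-- **Remark 1.1(b)** of Tracy–Widom (with `γ = α - β`).  For every `γ ∈ ℝ` and `k = m+1 ≥ 1`,
for all sufficiently large `s` the operators `I - γ L_k(s) δ` on `E_k` and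
`I - γ L⁰_{k-1}(s)` on `ℓ¹(X_{k-1}⁺)` are boundedly invertible and
`(I - γ L_k(s) δ)⁻¹ L_k(s) = L_k(s) + γ L⁰_{k,k-1}(s) (I - γ L⁰_{k-1}(s))⁻¹ L⁰_{k-1,k}(s)`. -/
theorem tracy_widom_remark1_1b
    (p q γ : ℝ) (hp : 0 ≤ p) (hq : 0 ≤ q) (hpq : p + q = 1) (m : ℕ)
    -- the k-particle generator, k = m+1 ≥ 1
    (Q : En (m+1) →L[ℝ] En (m+1))
    (hQ : ∀ (u : En (m+1)) (x : Conf (m+1)), Q u x = Qact p q (fun z => u z) x)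
    -- the operator δ on E_k
    (D : En (m+1) →L[ℝ] En (m+1))
    (hD : ∀ (u : En (m+1)) (x : Conf (m+1)), D u x = Dact (fun z => u z) x) :
    ∃ s₀ : ℝ, 0 ≤ s₀ ∧ ∀ s : ℝ, s₀ < s →
      -- the Bochner integral defining L_k(s) converges
      LapConv Q s ∧
      -- the operators with kernels φ̂_k((0,x),(0,y);s), φ̂_k(x,(0,y);s), φ̂_k((0,x),y;s)
      ∃ (L00 : Ep m →L[ℝ] Ep m) (L10 : Ep m →L[ℝ] En (m+1)) (L01 : En (m+1) →L[ℝ] Ep m),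
        (∀ (y x : ConfP m),
          L00 (lp.single 1 y (1:ℝ)) x = Lop Q s (lp.single 1 (cons0 y) (1:ℝ)) (cons0 x)) ∧
        (∀ (y : ConfP m) (x : Conf (m+1)),
          L10 (lp.single 1 y (1:ℝ)) x = Lop Q s (lp.single 1 (cons0 y) (1:ℝ)) x) ∧
        (∀ (y : Conf (m+1)) (x : ConfP m),
          L01 (lp.single 1 y (1:ℝ)) x = Lop Q s (lp.single 1 y (1:ℝ)) (cons0 x)) ∧
        -- bounded invertibility of I - γ L_k(s) δ and I - γ L⁰_{k-1}(s) …
        ∃ (N₁ : En (m+1) →L[ℝ] En (m+1)) (N₂ : Ep m →L[ℝ] Ep m),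
          N₁ * (1 - γ • (Lop Q s * D)) = 1 ∧ (1 - γ • (Lop Q s * D)) * N₁ = 1 ∧
          N₂ * (1 - γ • L00) = 1 ∧ (1 - γ • L00) * N₂ = 1 ∧
          -- … and the identity
          N₁ * Lop Q s = Lop Q s + γ • (L10.comp (N₂.comp L01)) :=
  tracy_widom_remark1_1b_general γ m Q D hD
end
end

section
/- The function u satisfies u(x,0) = 1 if x = y and u(x,0) = 0 otherwise, and for every integer x ≥ 0 the map t ↦ u(x,t) is differentiable on [0,∞) with ∂_t u(x,t) = p·u(x−1,t) + q·u(x+1,t) − u(x,t) for all x ≥ 1, and ∂_t u(0,t) = q·u(1,t) − p·u(0,t). (Thus the contour-integral formula gives the transition probability of single-particle ASEP on Z^+ started at y.) -/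
/-!
Differentiating under the integral sign, `∂ₜ u(x,t)` is the contour integral of `ε(ξ)` times
the integrand, so both Kolmogorov equations reduce to pointwise identities for the kernel. In
the bulk, each of the plane waves `ξ^x` and `(τ/ξ)^x` is an eigenfunction of the generator with
eigenvalue `ε(ξ)` (the second because `qτ = p`); the coefficient `(τ - ξ)/(1 - ξ)` is exactly
what makes the boundary equation at `x = 0` hold as well. At `t = 0` the first term gives
`δ_{xy}` by the residue at `0`, while the second integrates to zero: for `n ≥ 1` the residues of
`1 / (ξ^n (1 - ξ))` at `0` and at `1` cancel.
-/

open Set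
noncomputable section

/-- The contour-integral formula for the single-particle ASEP transition probability on
`ℤ⁺`, started at `y`:
`u(x,t) = (1/2πi) ∮_{|ξ|=R} [ξ^{x-y-1} + ((τ-ξ)/(1-ξ)) τ^x ξ^{-x-y-2}] e^{ε(ξ)t} dξ`,
where `τ = p/q` and `ε(ξ) = pξ⁻¹ + qξ - 1`. -/
def uASEP (p q : ℝ) (y : ℕ) (R : ℝ) (x : ℕ) (t : ℝ) : ℂ :=
  (2 * Real.pi * Complex.I)⁻¹ *
    ∮ ξ in C(0, R),
      (ξ ^ ((x : ℤ) - (y : ℤ) - 1)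
        + (((p / q : ℝ) : ℂ) - ξ) / (1 - ξ) * ((p / q : ℝ) : ℂ) ^ x
            * ξ ^ (-(x : ℤ) - (y : ℤ) - 2))
      * Complex.exp (((p : ℂ) * ξ⁻¹ + (q : ℂ) * ξ - 1) * (t : ℂ))

open Metric Complex
open scoped Real

theorem hasDerivAt_intervalIntegral_mul_cexp {g h : ℝ → ℂ} (hg : Continuous g)
    (hh : Continuous h) (a b t : ℝ) :
    HasDerivAt (fun s : ℝ => ∫ θ in a..b, g θ * exp (h θ * s))
      (∫ θ in a..b, h θ * (g θ * exp (h θ * t))) t := by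
  have hF' : Continuous fun x : ℝ × ℝ => h x.1 * (g x.1 * exp (h x.1 * x.2)) := by fun_prop
  obtain ⟨M, hM⟩ := (isCompact_uIcc.prod (isCompact_closedBall t 1)).exists_bound_of_continuousOn
    hF'.continuousOn
  refine (intervalIntegral.hasDerivAt_integral_of_dominated_loc_of_deriv_le (𝕜 := ℝ)
    (μ := MeasureTheory.volume) (F := fun s θ => g θ * exp (h θ * s))
    (F' := fun s θ => h θ * (g θ * exp (h θ * s))) (bound := fun _ => M)
    (ball_mem_nhds t one_pos) (.of_forall fun s => ?_) ?_ ?_ ?_ intervalIntegrable_const ?_).2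
  · exact (by fun_prop : Continuous fun θ => g θ * exp (h θ * s)).aestronglyMeasurable
  · exact (by fun_prop : Continuous fun θ => g θ * exp (h θ * t)).intervalIntegrable _ _
  · exact (by fun_prop : Continuous fun θ => h θ * (g θ * exp (h θ * t))).aestronglyMeasurable
  · exact .of_forall fun θ hθ s hs =>
      hM (θ, s) ⟨uIoc_subset_uIcc hθ, ball_subset_closedBall hs⟩
  · refine .of_forall fun θ _ s _ => ?_
    have := (((hasDerivAt_id (s : ℂ)).const_mul (h θ)).cexp.comp_ofReal).const_mul (g θ)
    simpa [mul_comm, mul_left_comm] using this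

theorem hasDerivAt_circleIntegral_mul_cexp {f e : ℂ → ℂ} {c : ℂ} {R : ℝ} (hR : 0 ≤ R)
    (hf : ContinuousOn f (sphere c R)) (he : ContinuousOn e (sphere c R)) (t : ℝ) :
    HasDerivAt (fun s : ℝ => ∮ z in C(c, R), f z * exp (e z * s))
      (∮ z in C(c, R), e z * (f z * exp (e z * t))) t := by
  have hmaps : ∀ θ, circleMap c R θ ∈ sphere c R := circleMap_mem_sphere c hR
  have hd : Continuous fun θ => deriv (circleMap c R) θ := by
    simp only [deriv_circleMap]; fun_prop
  simpa only [circleIntegral, smul_eq_mul, mul_assoc, mul_left_comm, Function.comp_apply] using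
    hasDerivAt_intervalIntegral_mul_cexp
      (hd.fun_mul (hf.comp_continuous (continuous_circleMap c R) hmaps))
      (he.comp_continuous (continuous_circleMap c R) hmaps) 0 (2 * π) t

theorem one_sub_ne_zero_of_mem_sphere_zero {R : ℝ} (hR : R ≠ 1) {z : ℂ}
    (hz : z ∈ sphere (0 : ℂ) R) : 1 - z ≠ 0 := by
  rw [sub_ne_zero]
  rintro rfl
  exact hR (by simpa using hz.symm)

theorem continuousOn_zpow_sphere_zero {R : ℝ} (hR : R ≠ 0) (n : ℤ) :
    ContinuousOn (fun z : ℂ => z ^ n) (sphere 0 R) :=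
  (continuousOn_zpow₀ n).mono fun _ hz => ne_of_mem_sphere hz hR

theorem continuousOn_inv_one_sub_mul_zpow {R : ℝ} (hR : 1 < R) (n : ℤ) :
    ContinuousOn (fun z : ℂ => (1 - z)⁻¹ * z ^ n) (sphere 0 R) := by
  refine ((continuousOn_const.sub continuousOn_id).inv₀ fun z hz => ?_).mul
    (continuousOn_zpow_sphere_zero (by linarith) n)
  exact one_sub_ne_zero_of_mem_sphere_zero hR.ne' hz

theorem circleIntegral_zpow {R : ℝ} (hR : R ≠ 0) (n : ℤ) :
    (∮ z in C(0, R), z ^ n) = if n = -1 then 2 * π * I else 0 := by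
  split_ifs with hn
  · subst hn
    simpa using circleIntegral.integral_sub_center_inv 0 hR
  · simpa using circleIntegral.integral_sub_zpow_of_ne hn 0 0 R

theorem circleIntegral_inv_one_sub {R : ℝ} (hR : 1 < R) :
    (∮ z in C(0, R), (1 - z)⁻¹) = -(2 * π * I) := by
  have h1 : (1 : ℂ) ∈ ball (0 : ℂ) R := by simpa using hR
  rw [← circleIntegral.integral_sub_inv_of_mem_ball h1, ← neg_one_mul,
    ← circleIntegral.integral_const_mul]
  refine circleIntegral.integral_congr (by linarith) fun z _ => ?_
  rw [neg_one_mul, ← inv_neg, neg_sub]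

/-- Partial fractions: `1 / (z^(n+1) (1 - z)) = z^(-(n+1)) + 1 / (z^n (1 - z))`. -/
theorem circleIntegral_inv_one_sub_mul_zpow_neg_succ {R : ℝ} (hR : 1 < R) (n : ℕ) :
    (∮ z in C(0, R), (1 - z)⁻¹ * z ^ (-(n + 1 : ℤ)))
      = (∮ z in C(0, R), z ^ (-(n + 1 : ℤ))) + ∮ z in C(0, R), (1 - z)⁻¹ * z ^ (-(n : ℤ)) := by
  have hR0 : 0 ≤ R := by linarith
  rw [← circleIntegral.integral_add
    ((continuousOn_zpow_sphere_zero (by linarith) _).circleIntegrable hR0)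
    ((continuousOn_inv_one_sub_mul_zpow hR _).circleIntegrable hR0)]
  refine circleIntegral.integral_congr hR0 fun z hz => ?_
  have h₀ : z ≠ 0 := ne_of_mem_sphere hz (by linarith)
  have h₁ : 1 - z ≠ 0 := one_sub_ne_zero_of_mem_sphere_zero hR.ne' hz
  simp only [zpow_neg, zpow_natCast, zpow_add_one₀ h₀]
  field_simp
  ring

theorem circleIntegral_inv_one_sub_mul_zpow_neg {R : ℝ} (hR : 1 < R) {n : ℕ} (hn : 1 ≤ n) :
    (∮ z in C(0, R), (1 - z)⁻¹ * z ^ (-(n : ℤ))) = 0 := by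
  induction n, hn using Nat.le_induction with
  | base =>
    rw [show ((1 : ℕ) : ℤ) = (0 : ℕ) + 1 by simp, circleIntegral_inv_one_sub_mul_zpow_neg_succ hR,
      circleIntegral_zpow (by linarith), if_pos (by simp)]
    simp [circleIntegral_inv_one_sub hR]
  | succ n hn ih =>
    rw [Nat.cast_succ, circleIntegral_inv_one_sub_mul_zpow_neg_succ hR, ih,
      circleIntegral_zpow (by linarith), if_neg (by omega), add_zero]

section Kernel

variable {K : Type*} [Field K]

def asepDispersion (p q ξ : K) : K := p * ξ⁻¹ + q * ξ - 1

def asepKernel (τ : K) (y x : ℕ) (ξ : K) : K :=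
  ξ ^ ((x : ℤ) - (y : ℤ) - 1) + (τ - ξ) / (1 - ξ) * τ ^ x * ξ ^ (-(x : ℤ) - (y : ℤ) - 2)

theorem asepKernel_eq_zpow_mul {ξ : K} (hξ : ξ ≠ 0) (τ : K) (y x : ℕ) :
    asepKernel τ y x ξ
      = ξ ^ (-(y : ℤ) - 2) * (ξ ^ (x + 1) + (τ - ξ) / (1 - ξ) * (τ / ξ) ^ x) := by
  have h₁ : ξ ^ ((x : ℤ) - y - 1) = ξ ^ (-(y : ℤ) - 2) * ξ ^ (x + 1) := by
    rw [← zpow_natCast, ← zpow_add₀ hξ]; congr 1; push_cast; ring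
  have h₂ : ξ ^ (-(x : ℤ) - y - 2) = ξ ^ (-(y : ℤ) - 2) / ξ ^ x := by
    rw [← zpow_natCast, ← zpow_sub₀ hξ]; congr 1; ring
  rw [asepKernel, h₁, h₂, div_pow]
  ring

theorem asepKernel_bulk {p q τ ξ : K} (hτ : q * τ = p) (h₀ : ξ ≠ 0) (h₁ : 1 - ξ ≠ 0) (y m : ℕ) :
    p * asepKernel τ y m ξ + q * asepKernel τ y (m + 2) ξ - asepKernel τ y (m + 1) ξ
      = asepDispersion p q ξ * asepKernel τ y (m + 1) ξ := by
  simp only [asepKernel_eq_zpow_mul h₀, asepDispersion, ← hτ, pow_succ, div_pow]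
  field_simp
  ring

theorem asepKernel_boundary {p q τ ξ : K} (hτ : q * τ = p) (hpq : p + q = 1) (h₀ : ξ ≠ 0)
    (h₁ : 1 - ξ ≠ 0) (y : ℕ) :
    q * asepKernel τ y 1 ξ - p * asepKernel τ y 0 ξ
      = asepDispersion p q ξ * asepKernel τ y 0 ξ := by
  subst hτ
  simp only [asepKernel_eq_zpow_mul h₀, asepDispersion]
  field_simp
  linear_combination (ξ ^ 3 - ξ * τ) * hpq

end Kernel

theorem continuousOn_asepKernel {R : ℝ} (hR : 1 < R) (τ : ℂ) (y x : ℕ) :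
    ContinuousOn (asepKernel τ y x) (sphere 0 R) := by
  have hR0 : R ≠ 0 := by linarith
  refine (continuousOn_zpow_sphere_zero hR0 _).add
    (((continuousOn_const.sub continuousOn_id).div (continuousOn_const.sub continuousOn_id)
      fun z hz => ?_).mul continuousOn_const |>.mul (continuousOn_zpow_sphere_zero hR0 _))
  exact one_sub_ne_zero_of_mem_sphere_zero hR.ne' hz

theorem continuousOn_asepDispersion {R : ℝ} (hR : R ≠ 0) (p q : ℂ) :
    ContinuousOn (asepDispersion p q) (sphere 0 R) :=
  ((continuousOn_const.mul (continuousOn_inv₀.mono fun _ hz => ne_of_mem_sphere hz hR)).add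
    (continuousOn_const.mul continuousOn_id)).sub continuousOn_const

theorem circleIntegral_asepKernel {R : ℝ} (hR : 1 < R) (τ : ℂ) (y x : ℕ) :
    (∮ z in C(0, R), asepKernel τ y x z) = if x = y then 2 * π * I else 0 := by
  have hR0 : 0 ≤ R := by linarith
  obtain ⟨n, hn, hxy⟩ : ∃ n : ℕ, 2 ≤ n ∧ -(x : ℤ) - y - 2 = -n :=
    ⟨x + y + 2, by omega, by push_cast; ring⟩
  have hsplit : EqOn (asepKernel τ y x)
      (fun z => z ^ ((x : ℤ) - y - 1)
        + τ ^ x * (z ^ (-(n : ℤ)) + (τ - 1) * ((1 - z)⁻¹ * z ^ (-(n : ℤ))))) (sphere 0 R) := by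
    intro z hz
    have h₁ : 1 - z ≠ 0 := one_sub_ne_zero_of_mem_sphere_zero hR.ne' hz
    rw [asepKernel, hxy]
    field_simp
    ring
  have hzpow := continuousOn_zpow_sphere_zero (R := R) (by linarith)
  have hfrac := (continuousOn_const (c := τ - 1)).fun_mul
    (continuousOn_inv_one_sub_mul_zpow hR (-(n : ℤ)))
  rw [circleIntegral.integral_congr hR0 hsplit, circleIntegral.integral_add
      ((hzpow _).circleIntegrable hR0)
      ((continuousOn_const.fun_mul ((hzpow _).fun_add hfrac)).circleIntegrable hR0),
    circleIntegral.integral_const_mul, circleIntegral.integral_add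
      ((hzpow _).circleIntegrable hR0) (hfrac.circleIntegrable hR0),
    circleIntegral.integral_const_mul, circleIntegral_inv_one_sub_mul_zpow_neg hR (by omega),
    circleIntegral_zpow (by linarith), circleIntegral_zpow (by linarith),
    if_neg (show -(n : ℤ) ≠ -1 by omega)]
  simp only [show (x : ℤ) - y - 1 = -1 ↔ x = y by omega, mul_zero, add_zero]

theorem ofReal_mul_ofReal_div_cancel (p : ℝ) {q : ℝ} (hq : q ≠ 0) :
    (q : ℂ) * ((p / q : ℝ) : ℂ) = p := by
  rw [ofReal_div]; exact mul_div_cancel₀ _ (ofReal_ne_zero.2 hq)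

def uASEPIntegrand (p q : ℝ) (y x : ℕ) (t : ℝ) (z : ℂ) : ℂ :=
  asepKernel ((p / q : ℝ) : ℂ) y x z * exp (asepDispersion (p : ℂ) q z * t)

theorem uASEP_eq_circleIntegral (p q : ℝ) (y : ℕ) (R : ℝ) (x : ℕ) (t : ℝ) :
    uASEP p q y R x t = (2 * π * I)⁻¹ * ∮ z in C(0, R), uASEPIntegrand p q y x t z :=
  rfl

theorem continuousOn_uASEPIntegrand {R : ℝ} (hR : 1 < R) (p q : ℝ) (y x : ℕ) (t : ℝ) :
    ContinuousOn (uASEPIntegrand p q y x t) (sphere 0 R) :=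
  (continuousOn_asepKernel hR _ y x).mul
    ((continuousOn_asepDispersion (by linarith) _ _).mul continuousOn_const).cexp

theorem circleIntegrable_const_mul_uASEPIntegrand {R : ℝ} (hR : 1 < R) (c : ℂ) (p q : ℝ)
    (y x : ℕ) (t : ℝ) : CircleIntegrable (fun z => c * uASEPIntegrand p q y x t z) 0 R :=
  (continuousOn_const.fun_mul (continuousOn_uASEPIntegrand hR p q y x t)).circleIntegrable
    (by linarith)

theorem uASEP_time_zero {R : ℝ} (hR : 1 < R) (p q : ℝ) (y x : ℕ) :
    uASEP p q y R x 0 = if x = y then 1 else 0 := by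
  simp only [uASEP_eq_circleIntegral, uASEPIntegrand, ofReal_zero, mul_zero, exp_zero, mul_one,
    circleIntegral_asepKernel hR]
  split_ifs
  · exact inv_mul_cancel₀ (by simp [Real.pi_ne_zero])
  · exact mul_zero _

theorem hasDerivAt_uASEP {R : ℝ} (hR : 1 < R) (p q : ℝ) (y x : ℕ) (t : ℝ) :
    HasDerivAt (uASEP p q y R x) ((2 * π * I)⁻¹ *
      ∮ z in C(0, R), asepDispersion (p : ℂ) q z * uASEPIntegrand p q y x t z) t :=
  (hasDerivAt_circleIntegral_mul_cexp (by linarith) (continuousOn_asepKernel hR _ y x)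
    (continuousOn_asepDispersion (by linarith) _ _) t).const_mul _

theorem hasDerivAt_uASEP_bulk {R : ℝ} (hR : 1 < R) {p q : ℝ} (hq : q ≠ 0) (y m : ℕ) (t : ℝ) :
    HasDerivAt (uASEP p q y R (m + 1))
      (p * uASEP p q y R m t + q * uASEP p q y R (m + 2) t - uASEP p q y R (m + 1) t) t := by
  have hτ := ofReal_mul_ofReal_div_cancel p hq
  have hR0 : 0 ≤ R := by linarith
  have hint (c : ℂ) (x : ℕ) := circleIntegrable_const_mul_uASEPIntegrand hR c p q y x t
  have hsum : (∮ z in C(0, R), asepDispersion (p : ℂ) q z * uASEPIntegrand p q y (m + 1) t z)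
      = p * (∮ z in C(0, R), uASEPIntegrand p q y m t z)
        + q * (∮ z in C(0, R), uASEPIntegrand p q y (m + 2) t z)
        - ∮ z in C(0, R), uASEPIntegrand p q y (m + 1) t z := by
    rw [← circleIntegral.integral_const_mul, ← circleIntegral.integral_const_mul,
      ← circleIntegral.integral_add (hint _ m) (hint _ (m + 2)), ← circleIntegral.integral_sub]
    · refine circleIntegral.integral_congr hR0 fun z hz => ?_
      simp only [uASEPIntegrand]
      linear_combination -exp (asepDispersion (p : ℂ) q z * t) * asepKernel_bulk hτ
        (ne_of_mem_sphere hz (by linarith)) (one_sub_ne_zero_of_mem_sphere_zero hR.ne' hz) y m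
    · exact (hint _ m).add (hint _ (m + 2))
    · exact (continuousOn_uASEPIntegrand hR p q y (m + 1) t).circleIntegrable hR0
  convert hasDerivAt_uASEP hR p q y (m + 1) t using 1
  rw [uASEP_eq_circleIntegral, uASEP_eq_circleIntegral, uASEP_eq_circleIntegral, hsum]
  ring

theorem hasDerivAt_uASEP_boundary {R : ℝ} (hR : 1 < R) {p q : ℝ} (hq : q ≠ 0) (hpq : p + q = 1)
    (y : ℕ) (t : ℝ) :
    HasDerivAt (uASEP p q y R 0) (q * uASEP p q y R 1 t - p * uASEP p q y R 0 t) t := by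
  have hR0 : 0 ≤ R := by linarith
  have hint (c : ℂ) (x : ℕ) := circleIntegrable_const_mul_uASEPIntegrand hR c p q y x t
  have hsum : (∮ z in C(0, R), asepDispersion (p : ℂ) q z * uASEPIntegrand p q y 0 t z)
      = q * (∮ z in C(0, R), uASEPIntegrand p q y 1 t z)
        - p * ∮ z in C(0, R), uASEPIntegrand p q y 0 t z := by
    rw [← circleIntegral.integral_const_mul, ← circleIntegral.integral_const_mul,
      ← circleIntegral.integral_sub (hint _ 1) (hint _ 0)]
    refine circleIntegral.integral_congr hR0 fun z hz => ?_
    simp only [uASEPIntegrand]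
    linear_combination -exp (asepDispersion (p : ℂ) q z * t) *
      asepKernel_boundary (ofReal_mul_ofReal_div_cancel p hq) (by exact_mod_cast hpq)
        (ne_of_mem_sphere hz (by linarith)) (one_sub_ne_zero_of_mem_sphere_zero hR.ne' hz) y
  convert hasDerivAt_uASEP hR p q y 0 t using 1
  rw [uASEP_eq_circleIntegral, uASEP_eq_circleIntegral, hsum]
  ring

theorem uASEP_solves_kolmogorov_general
    (p q : ℝ) (hq : 0 < q) (hpq : p + q = 1)
    (y : ℕ) (R : ℝ) (hR : max 1 (p / q) < R) :
    (∀ x : ℕ, uASEP p q y R x 0 = if x = y then 1 else 0) ∧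
    (∀ t ∈ Ici (0:ℝ), ∀ x : ℕ, 1 ≤ x →
      HasDerivWithinAt (fun t' => uASEP p q y R x t')
        ((p : ℂ) * uASEP p q y R (x - 1) t + (q : ℂ) * uASEP p q y R (x + 1) t
          - uASEP p q y R x t) (Ici 0) t) ∧
    (∀ t ∈ Ici (0:ℝ),
      HasDerivWithinAt (fun t' => uASEP p q y R 0 t')
        ((q : ℂ) * uASEP p q y R 1 t - (p : ℂ) * uASEP p q y R 0 t) (Ici 0) t) := by
  have hR1 : 1 < R := (le_max_left _ _).trans_lt hR
  refine ⟨uASEP_time_zero hR1 p q y, fun t _ x hx => ?_, fun t _ =>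
    (hasDerivAt_uASEP_boundary hR1 hq.ne' hpq y t).hasDerivWithinAt⟩
  obtain ⟨m, rfl⟩ := Nat.exists_eq_add_of_le' hx
  simpa using (hasDerivAt_uASEP_bulk hR1 hq.ne' y m t).hasDerivWithinAt (s := Ici 0)

/-- The contour-integral formula solves the Kolmogorov equations of single-particle ASEP on
`ℤ⁺` (no boundary injection/ejection) with initial condition a particle at `y`:
`u(x,0) = δ_{x,y}`, and on `[0,∞)`,
`∂ₜu(x,t) = p u(x-1,t) + q u(x+1,t) - u(x,t)` for `x ≥ 1`, while
`∂ₜu(0,t) = q u(1,t) - p u(0,t)`. -/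
theorem uASEP_solves_kolmogorov
    (p q : ℝ) (hp : 0 < p) (hq : 0 < q) (hpq : p + q = 1)
    (y : ℕ) (R : ℝ) (hR : max 1 (p / q) < R) :
    (∀ x : ℕ, uASEP p q y R x 0 = if x = y then 1 else 0) ∧
    (∀ t ∈ Ici (0:ℝ), ∀ x : ℕ, 1 ≤ x →
      HasDerivWithinAt (fun t' => uASEP p q y R x t')
        ((p : ℂ) * uASEP p q y R (x - 1) t + (q : ℂ) * uASEP p q y R (x + 1) t
          - uASEP p q y R x t) (Ici 0) t) ∧
    (∀ t ∈ Ici (0:ℝ),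
      HasDerivWithinAt (fun t' => uASEP p q y R 0 t')
        ((q : ℂ) * uASEP p q y R 1 t - (p : ℂ) * uASEP p q y R 0 t) (Ici 0) t) :=
  uASEP_solves_kolmogorov_general p q hq hpq y R hR
end
end
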